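/- With α₁(r) = −J₀'(r)/r and α₂(r) = −J₀''(r), the product (α₁(r)² − 1/4)(α₂(r)² − 1/4) equals 3r⁴/256 + O(r⁶) as r → 0. -/

import Mathlib

open Real Filter Asymptotics

/-- The Bessel function of the first kind of order zero, defined by its power series. -/
noncomputable def besselJ0 (x : ℝ) : ℝ :=
  ∑' n : ℕ, (-1) ^ n / ((Nat.factorial n : ℝ)) ^ 2 * (x / 2) ^ (2 * n)

/-!
`J₀(x) = F(x²)` for the entire function `F(t) = ∑ (-1/4)ⁿ tⁿ / (n!)²`, which has `F'(0) = -1/4`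
and `F''(0) = 1/32`. Write `F'(t) = -1/4 + t s(t)` with `s = dslope F' 0`, smooth, `s(0) = 1/32`.
With `t = r²` the chain rule gives `α₁(r) = 1/2 - t u₁(t)` and `α₂(r) = 1/2 - t u₂(t)`, where
`u₁ = 2s` and `u₂ = 2s + 4F''`, so `αᵢ² - 1/4 = -t uᵢ (1 - t uᵢ)`. Hence the product is `r⁴ H(r²)`
with `H` differentiable at `0` and `H(0) = u₁(0) u₂(0) = 3/256`, and `H(r²) - H(0) = O(r²)`.
-/

open FormalMultilinearSeries Topology Nat

section Calculus

variable {𝕜 : Type*} [NontriviallyNormedField 𝕜]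

theorem HasFPowerSeriesAt.iteratedDeriv_eq_factorial_mul [CompleteSpace 𝕜] [CharZero 𝕜]
    {f : 𝕜 → 𝕜} {c : ℕ → 𝕜} {x : 𝕜} (hf : HasFPowerSeriesAt f (ofScalars 𝕜 c) x) (n : ℕ) :
    iteratedDeriv n f x = n ! * c n := by
  have hc := congrFun (ofScalars_series_injective 𝕜 𝕜
    (hf.eq_formalMultilinearSeries hf.analyticAt.hasFPowerSeriesAt)) n
  rw [hc, mul_div_cancel₀ _ (by exact_mod_cast n.factorial_ne_zero)]

theorem hasDerivAt_comp_sq {F : 𝕜 → 𝕜} {x : 𝕜} (hF : DifferentiableAt 𝕜 F (x ^ 2)) :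
    HasDerivAt (fun y => F (y ^ 2)) (2 * x * deriv F (x ^ 2)) x :=
  (hF.hasDerivAt.comp x ((hasDerivAt_id' x).pow 2)).congr_deriv (by push_cast; ring)

theorem deriv_comp_sq {F : 𝕜 → 𝕜} (hF : Differentiable 𝕜 F) (x : 𝕜) :
    deriv (fun y => F (y ^ 2)) x = 2 * x * deriv F (x ^ 2) :=
  (hasDerivAt_comp_sq (hF _)).deriv

theorem deriv_deriv_comp_sq {F : 𝕜 → 𝕜} (hF : Differentiable 𝕜 F)
    (hF' : Differentiable 𝕜 (deriv F)) (x : 𝕜) :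
    deriv (deriv fun y => F (y ^ 2)) x =
      2 * deriv F (x ^ 2) + 4 * x ^ 2 * deriv (deriv F) (x ^ 2) := by
  rw [funext (deriv_comp_sq hF)]
  have h : HasDerivAt (fun y => 2 * y * deriv F (y ^ 2))
      (2 * 1 * deriv F (x ^ 2) + 2 * x * (2 * x * deriv (deriv F) (x ^ 2))) x :=
    ((hasDerivAt_id' x).const_mul 2).mul (hasDerivAt_comp_sq (hF' _))
  rw [h.deriv]
  ring

theorem DifferentiableAt.isBigO_comp_sq_sub {E : Type*} [NormedAddCommGroup E] [NormedSpace 𝕜 E]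
    {H : 𝕜 → E} (hH : DifferentiableAt 𝕜 H 0) :
    (fun x => H (x ^ 2) - H 0) =O[𝓝 0] fun x => x ^ 2 := by
  have hsq : Tendsto (fun x : 𝕜 => x ^ 2) (𝓝 0) (𝓝 0) := by
    simpa using (continuous_pow 2).tendsto (0 : 𝕜)
  simpa [Function.comp_def] using hH.isBigO_sub.comp_tendsto hsq

end Calculus

noncomputable def besselJ0Coeff (n : ℕ) : ℝ := (-1 / 4) ^ n / (n ! : ℝ) ^ 2

theorem radius_ofScalars_besselJ0Coeff : (ofScalars ℝ besselJ0Coeff).radius = ⊤ := by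
  refine ofScalars_radius_eq_top_of_tendsto ℝ _ (Eventually.of_forall fun n => by
    simp [besselJ0Coeff, factorial_ne_zero]) ?_
  have hratio (n : ℕ) :
      ‖besselJ0Coeff n.succ‖ / ‖besselJ0Coeff n‖ = 1 / 4 * (1 / ((n : ℝ) + 1)) ^ 2 := by
    simp only [besselJ0Coeff, norm_div, norm_pow, factorial_succ, RCLike.norm_natCast]
    push_cast
    field_simp
    norm_num
    ring
  simp only [hratio]
  simpa using (tendsto_one_div_add_atTop_nhds_zero_nat.pow 2).const_mul (1 / 4 : ℝ)

noncomputable def besselJ0OfSq : ℝ → ℝ := ofScalarsSum besselJ0Coeff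

theorem hasFPowerSeriesOnBall_besselJ0OfSq :
    HasFPowerSeriesOnBall besselJ0OfSq (ofScalars ℝ besselJ0Coeff) 0 ⊤ := by
  unfold besselJ0OfSq ofScalarsSum
  simpa [radius_ofScalars_besselJ0Coeff] using
    (ofScalars ℝ besselJ0Coeff).hasFPowerSeriesOnBall (by simp [radius_ofScalars_besselJ0Coeff])

theorem analyticAt_besselJ0OfSq (t : ℝ) : AnalyticAt ℝ besselJ0OfSq t :=
  hasFPowerSeriesOnBall_besselJ0OfSq.analyticAt_of_mem (by simp)

theorem besselJ0_eq_comp_sq : besselJ0 = fun x => besselJ0OfSq (x ^ 2) := by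
  funext x
  rw [besselJ0, besselJ0OfSq, ofScalars_sum_eq]
  refine tsum_congr fun n => ?_
  rw [besselJ0Coeff, smul_eq_mul, pow_mul, div_pow, div_pow, div_pow]
  ring

theorem deriv_besselJ0OfSq_zero : deriv besselJ0OfSq 0 = -1 / 4 := by
  simpa [besselJ0Coeff] using
    hasFPowerSeriesOnBall_besselJ0OfSq.hasFPowerSeriesAt.iteratedDeriv_eq_factorial_mul 1

theorem deriv_deriv_besselJ0OfSq_zero : deriv (deriv besselJ0OfSq) 0 = 1 / 32 := by
  have h2 := hasFPowerSeriesOnBall_besselJ0OfSq.hasFPowerSeriesAt.iteratedDeriv_eq_factorial_mul 2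
  rw [iteratedDeriv_succ, iteratedDeriv_one] at h2
  rw [h2, besselJ0Coeff]
  norm_num [factorial]

theorem deriv_besselJ0 (r : ℝ) : deriv besselJ0 r = 2 * r * deriv besselJ0OfSq (r ^ 2) := by
  rw [besselJ0_eq_comp_sq, deriv_comp_sq fun t => (analyticAt_besselJ0OfSq t).differentiableAt]

theorem deriv_deriv_besselJ0 (r : ℝ) :
    deriv (deriv besselJ0) r =
      2 * deriv besselJ0OfSq (r ^ 2) + 4 * r ^ 2 * deriv (deriv besselJ0OfSq) (r ^ 2) := by
  rw [besselJ0_eq_comp_sq,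
    deriv_deriv_comp_sq (fun t => (analyticAt_besselJ0OfSq t).differentiableAt)
      fun t => (analyticAt_besselJ0OfSq t).deriv.differentiableAt]

noncomputable def besselJ0Slope : ℝ → ℝ := dslope (deriv besselJ0OfSq) 0

theorem deriv_besselJ0OfSq_eq_add_mul_slope (t : ℝ) :
    deriv besselJ0OfSq t = -1 / 4 + t * besselJ0Slope t := by
  have hslope := sub_smul_dslope (deriv besselJ0OfSq) 0 t
  rw [sub_zero, smul_eq_mul, deriv_besselJ0OfSq_zero] at hslope
  rw [besselJ0Slope, hslope]
  ring

theorem besselJ0Slope_zero : besselJ0Slope 0 = 1 / 32 := by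
  rw [besselJ0Slope, dslope_same, deriv_deriv_besselJ0OfSq_zero]

theorem differentiableAt_besselJ0Slope_zero : DifferentiableAt ℝ besselJ0Slope 0 := by
  obtain ⟨p, hp⟩ := (analyticAt_besselJ0OfSq 0).deriv
  exact hp.has_fpower_series_dslope_fslope.differentiableAt

noncomputable def detAReduced (t : ℝ) : ℝ :=
  let u₁ := 2 * besselJ0Slope t
  let u₂ := 2 * besselJ0Slope t + 4 * deriv (deriv besselJ0OfSq) t
  u₁ * u₂ * (1 - t * u₁) * (1 - t * u₂)

theorem detA_eq_pow_four_mul_detAReduced {r : ℝ} (hr : r ≠ 0) :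
    ((-(deriv besselJ0 r) / r) ^ 2 - 1 / 4) * ((-(deriv (deriv besselJ0) r)) ^ 2 - 1 / 4) =
      r ^ 4 * detAReduced (r ^ 2) := by
  rw [deriv_deriv_besselJ0, deriv_besselJ0, deriv_besselJ0OfSq_eq_add_mul_slope,
    detAReduced]
  field_simp
  ring

theorem detAReduced_zero : detAReduced 0 = 3 / 256 := by
  rw [detAReduced, besselJ0Slope_zero, deriv_deriv_besselJ0OfSq_zero]
  norm_num

theorem differentiableAt_detAReduced_zero : DifferentiableAt ℝ detAReduced 0 := by
  have hs := differentiableAt_besselJ0Slope_zero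
  have hb : DifferentiableAt ℝ (deriv (deriv besselJ0OfSq)) 0 :=
    (analyticAt_besselJ0OfSq 0).deriv.deriv.differentiableAt
  unfold detAReduced
  fun_prop

/-- With `α₁(r) = −J₀'(r)/r` and `α₂(r) = −J₀''(r)`, one has
`(α₁(r)² − 1/4)(α₂(r)² − 1/4) = 3r⁴/256 + O(r⁶)` as `r → 0`. -/
theorem detA_asymptotics :
    (fun r : ℝ =>
        ((-(deriv besselJ0 r) / r) ^ 2 - 1 / 4) * ((-(deriv (deriv besselJ0) r)) ^ 2 - 1 / 4)
          - 3 * r ^ 4 / 256)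
      =O[nhdsWithin 0 {(0 : ℝ)}ᶜ] (fun r => r ^ 6) := by
  have hO : (fun r : ℝ => r ^ 4 * (detAReduced (r ^ 2) - detAReduced 0)) =O[𝓝 0]
      fun r => r ^ 4 * r ^ 2 :=
    (isBigO_refl _ _).mul differentiableAt_detAReduced_zero.isBigO_comp_sq_sub
  refine (hO.mono nhdsWithin_le_nhds).congr' ?_ (Eventually.of_forall fun r => by ring)
  filter_upwards [self_mem_nhdsWithin] with r hr
  rw [detA_eq_pow_four_mul_detAReduced hr, detAReduced_zero]
  ring
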